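/- Let M be an oriented n-dimensional manifold and let ∇ and ∇̄ be projectively equivalent torsion-free affine connections on M. Then for every symmetric (0,2)-tensor K of projective weight −4 (a section of the symmetric part of T^{(0,2)}M ⊗ (Λ_n)^{−4/(n+1)}M), the complete symmetrization of the covariant derivative, K_{ij,k} + K_{jk,i} + K_{ki,j}, is the same for ∇ and for ∇̄; i.e., the operator K ↦ Symmetrization(∇K) is projectively invariant on symmetric (0,2)-tensors of projective weight −4. -/

import Mathlib

open scoped ContDiff

noncomputable section

namespace ProjGeo

/-- The partial derivative of a function on `ℝⁿ` in the `j`-th coordinate direction. -/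
def pd {n : ℕ} (j : Fin n) (f : (Fin n → ℝ) → ℝ) (p : Fin n → ℝ) : ℝ :=
  fderiv ℝ f p (Pi.single j 1)

/-- Christoffel symbols in coordinates: `Γ p i j k` represents `Γ^i_{jk}` at the point `p`. -/
abbrev Christoffel (n : ℕ) := (Fin n → ℝ) → Fin n → Fin n → Fin n → ℝ

/-- A connection is torsion-free (symmetric) if `Γ^i_{jk} = Γ^i_{kj}`. -/
def TorsionFree {n : ℕ} (Γ : Christoffel n) : Prop :=
  ∀ p i j k, Γ p i j k = Γ p i k j

/-- Smoothness of the Christoffel symbols on the open set `U`. -/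
def SmoothChristoffelOn {n : ℕ} (U : Set (Fin n → ℝ)) (Γ : Christoffel n) : Prop :=
  ∀ i j k, ContDiffOn ℝ ∞ (fun p => Γ p i j k) U

/-- `γ` is a (parameterized) geodesic of the connection `Γ` on the parameter set `I`,
staying inside `U`: it is smooth and satisfies `γ̈^i + Γ^i_{jk} γ̇^j γ̇^k = 0`. -/
def IsGeodesicOn {n : ℕ} (U : Set (Fin n → ℝ)) (Γ : Christoffel n)
    (γ : ℝ → Fin n → ℝ) (I : Set ℝ) : Prop :=
  (∀ t ∈ I, γ t ∈ U) ∧ (∀ i, ContDiffOn ℝ ∞ (fun t => γ t i) I) ∧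
  ∀ t ∈ I, ∀ i,
    deriv (fun s => deriv (fun u => γ u i) s) t
      + ∑ j, ∑ k, Γ (γ t) i j k * deriv (fun u => γ u j) t * deriv (fun u => γ u k) t = 0

/-- `h` is a smooth regular reparameterisation defined on `J` and mapping `J` bijectively
onto `I`. -/
def IsReparam (I J : Set ℝ) (h : ℝ → ℝ) : Prop :=
  ContDiffOn ℝ ∞ h J ∧ (∀ t ∈ J, deriv h t ≠ 0) ∧ Set.BijOn h J I

/-- Two connections are projectively equivalent on `U`: each geodesic of the one is, after a
suitable reparameterisation, a geodesic of the other, and vice versa. -/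
def ProjEquivOn {n : ℕ} (U : Set (Fin n → ℝ)) (Γ Γ' : Christoffel n) : Prop :=
  (∀ γ I, IsOpen I → IsGeodesicOn U Γ γ I →
    ∃ h J, IsOpen J ∧ IsReparam I J h ∧ IsGeodesicOn U Γ' (fun t => γ (h t)) J) ∧
  (∀ γ I, IsOpen I → IsGeodesicOn U Γ' γ I →
    ∃ h J, IsOpen J ∧ IsReparam I J h ∧ IsGeodesicOn U Γ (fun t => γ (h t)) J)

/-- `Γ'` is obtained from `Γ` by the projective change associated with the 1-form `φ`:
`Γ'^i_{jk} = Γ^i_{jk} + φ_k δ^i_j + φ_j δ^i_k` on `U`. -/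
def ProjChange {n : ℕ} (Γ Γ' : Christoffel n) (φ : (Fin n → ℝ) → Fin n → ℝ)
    (U : Set (Fin n → ℝ)) : Prop :=
  ∀ p ∈ U, ∀ i j k, Γ' p i j k =
    Γ p i j k + (if i = j then φ p k else 0) + (if i = k then φ p j else 0)

end ProjGeo

namespace ProjGeo

/-- The covariant derivative `K_{ij,k}` of a `(0,2)`-tensor `K` of projective weight `w`
(in the local trivialization of `(Λₙ)^{w/(n+1)}` by `(dx¹∧⋯∧dxⁿ)^{w/(n+1)}`):
`K_{ij,k} = ∂_k K_{ij} − Γ^s_{ik} K_{sj} − Γ^s_{jk} K_{is} − (w/(n+1)) Γ^s_{sk} K_{ij}`. -/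
def covForm2 {n : ℕ} (w : ℝ) (Γ : Christoffel n) (K : (Fin n → ℝ) → Fin n → Fin n → ℝ)
    (p : Fin n → ℝ) (i j k : Fin n) : ℝ :=
  pd k (fun q => K q i j) p - ∑ s, Γ p s i k * K p s j - ∑ s, Γ p s j k * K p i s
    - (w / ((n : ℝ) + 1)) * (∑ s, Γ p s s k) * K p i j

end ProjGeo

/-!
Comparing the geodesic equation of a geodesic `γ` of `Γ` with that of its reparametrisation,
a geodesic of `Γ'`, shows that the difference tensor `D = Γ' - Γ` satisfies `D(v, v) ∥ v` for
every tangent vector `v`. Since `D` is symmetric in its lower indices, this forces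
`D^i_{jk} = δ^i_j φ_k + δ^i_k φ_j`. Under such a change the covariant derivative of a `(0,2)`-tensor
of weight `w` changes by `-(w + 2) φ_k K_{ij} - φ_i K_{kj} - φ_j K_{ik}`, so for symmetric `K`
the cyclic sum changes by `-(w + 4) (φ_i K_{jk} + φ_j K_{ki} + φ_k K_{ij})`, which vanishes for
`w = -4`.
-/

namespace ProjGeo

open Set

def quadContract {n : ℕ} (T : Fin n → Fin n → Fin n → ℝ) (v : Fin n → ℝ) (i : Fin n) : ℝ :=
  ∑ j, ∑ k, T i j k * v j * v k

lemma quadContract_sub {n : ℕ} (T T' : Fin n → Fin n → Fin n → ℝ) (v : Fin n → ℝ) (i : Fin n) :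
    quadContract (T' - T) v i = quadContract T' v i - quadContract T v i := by
  simp only [quadContract, Pi.sub_apply, sub_mul, Finset.sum_sub_distrib]

lemma quadContract_smul {n : ℕ} (T : Fin n → Fin n → Fin n → ℝ) (v : Fin n → ℝ) (c : ℝ)
    (i : Fin n) : quadContract T (c • v) i = c ^ 2 * quadContract T v i := by
  simp only [quadContract, Pi.smul_apply, smul_eq_mul, Finset.mul_sum]
  refine Finset.sum_congr rfl fun j _ => Finset.sum_congr rfl fun k _ => by ring

lemma quadContract_single_add_single {n : ℕ} (T : Fin n → Fin n → Fin n → ℝ) (j k : Fin n)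
    (s t : ℝ) (i : Fin n) :
    quadContract T (Pi.single j s + Pi.single k t) i
      = s ^ 2 * T i j j + s * t * (T i j k + T i k j) + t ^ 2 * T i k k := by
  simp only [quadContract, Pi.add_apply, Pi.single_apply, mul_add, add_mul, mul_ite, ite_mul,
    mul_zero, zero_mul, Finset.sum_add_distrib, Finset.sum_ite_eq', Finset.mem_univ, if_true]
  ring

lemma exists_eq_delta_of_quadContract_parallel {n : ℕ} (D : Fin n → Fin n → Fin n → ℝ)
    (hD : ∀ i j k, D i j k = D i k j)
    (hpar : ∀ v a b, quadContract D v a * v b = quadContract D v b * v a) :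
    ∃ φ : Fin n → ℝ, ∀ i j k,
      D i j k = (if i = j then φ k else 0) + (if i = k then φ j else 0) := by
  have H : ∀ j k s t a b, (s ^ 2 * D a j j + s * t * (D a j k + D a k j) + t ^ 2 * D a k k)
      * (Pi.single j s + Pi.single k t : Fin n → ℝ) b
      = (s ^ 2 * D b j j + s * t * (D b j k + D b k j) + t ^ 2 * D b k k)
      * (Pi.single j s + Pi.single k t : Fin n → ℝ) a := fun j k s t a b => by
    rw [← quadContract_single_add_single, ← quadContract_single_add_single]
    exact hpar _ a b
  have hdiag : ∀ a j, a ≠ j → D a j j = 0 := fun a j haj => by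
    simpa [haj] using H j j 1 0 a j
  have hmixed : ∀ a j k, a ≠ j → a ≠ k → j ≠ k → D a j k = 0 := fun a j k haj hak hjk => by
    have := H j k 1 1 a j
    simp [haj, hak, hjk, hdiag a j haj, hdiag a k hak, ← hD a j k] at this
    linarith
  have htrace : ∀ j k, j ≠ k → 2 * D j j k = D k k k ∧ 2 * D k j k = D j j j := by
    intro j k hjk
    have hp := H j k 1 1 k j
    have hm := H j k 1 (-1) k j
    simp [hjk, Ne.symm hjk, hdiag k j (Ne.symm hjk), hdiag j k hjk, ← hD j j k,
      ← hD k j k] at hp hm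
    constructor <;> linarith
  refine ⟨fun i => D i i i / 2, fun i j k => ?_⟩
  by_cases hij : i = j <;> by_cases hik : i = k
  · subst hij hik; simp only [if_true]; ring
  · subst hij; simp [hik]; linarith [(htrace i k hik).1]
  · subst hik; simp [hij]; linarith [(htrace j i (Ne.symm hij)).2]
  · by_cases hjk : j = k
    · subst hjk; simp [hij, hdiag i j hij]
    · simp [hij, hik, hmixed i j k hij hik hjk]

lemma hasDerivAt_deriv_of_contDiffOn {f : ℝ → ℝ} {I : Set ℝ} (hf : ContDiffOn ℝ ∞ f I)
    (hI : IsOpen I) {t : ℝ} (ht : t ∈ I) : HasDerivAt f (deriv f t) t :=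
  ((hf.contDiffAt (hI.mem_nhds ht)).differentiableAt (by simp)).hasDerivAt

lemma hasDerivAt_deriv_deriv_of_contDiffOn {f : ℝ → ℝ} {I : Set ℝ} (hf : ContDiffOn ℝ ∞ f I)
    (hI : IsOpen I) {t : ℝ} (ht : t ∈ I) : HasDerivAt (deriv f) (deriv (deriv f) t) t :=
  hasDerivAt_deriv_of_contDiffOn (hf.deriv_of_isOpen hI le_rfl) hI ht

/-- The factor is `-h''/h'²`, read off by comparing the geodesic equations of `γ` and
`γ ∘ h`. -/
lemma IsGeodesicOn.exists_quadContract_sub_eq_smul {n : ℕ} {U : Set (Fin n → ℝ)}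
    {Γ Γ' : Christoffel n} {γ : ℝ → Fin n → ℝ} {I J : Set ℝ} {h : ℝ → ℝ}
    (hγ : IsGeodesicOn U Γ γ I) (hI : IsOpen I) (hJ : IsOpen J) (hh : IsReparam I J h)
    (hγh : IsGeodesicOn U Γ' (fun t => γ (h t)) J) {s : ℝ} (hs : s ∈ J) :
    ∃ c : ℝ, ∀ i, quadContract (Γ' (γ (h s)) - Γ (γ (h s)))
      (fun j => deriv (fun u => γ u j) (h s)) i = c * deriv (fun u => γ u i) (h s) := by
  obtain ⟨-, hγsm, hγeq⟩ := hγ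
  obtain ⟨hhsm, hh'ne, hhbij⟩ := hh
  set v : Fin n → ℝ := fun j => deriv (fun u => γ u j) (h s)
  have hhs : h s ∈ I := hhbij.mapsTo hs
  have hchain : ∀ j, ∀ u ∈ J, HasDerivAt (fun u => γ (h u) j)
      (deriv (fun u => γ u j) (h u) * deriv h u) u := fun j u hu =>
    (hasDerivAt_deriv_of_contDiffOn (hγsm j) hI (hhbij.mapsTo hu)).comp u
      (hasDerivAt_deriv_of_contDiffOn hhsm hJ hu)
  have hfirst : ∀ j, deriv (fun u => γ (h u) j) s = deriv h s * v j := fun j => by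
    rw [(hchain j s hs).deriv, mul_comm]
  have hsecond : ∀ i, deriv (fun u => deriv (fun u => γ (h u) i) u) s
      = deriv (fun u => deriv (fun u => γ u i) u) (h s) * deriv h s ^ 2
        + v i * deriv (deriv h) s := fun i => by
    have hcongr : (fun u => deriv (fun u => γ (h u) i) u)
        =ᶠ[nhds s] fun u => deriv (fun u => γ u i) (h u) * deriv h u := by
      filter_upwards [hJ.mem_nhds hs] with u hu using (hchain i u hu).deriv
    have hprod := ((hasDerivAt_deriv_deriv_of_contDiffOn (hγsm i) hI hhs).comp s
      (hasDerivAt_deriv_of_contDiffOn hhsm hJ hs)).mul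
      (hasDerivAt_deriv_deriv_of_contDiffOn hhsm hJ hs)
    rw [hcongr.deriv_eq]
    exact hprod.deriv.trans (by simp only [Function.comp_apply, v]; ring)
  have hne : deriv h s ≠ 0 := hh'ne s hs
  refine ⟨-deriv (deriv h) s / deriv h s ^ 2, fun i => ?_⟩
  have hΓ := hγeq (h s) hhs i
  have hΓ' := hγh.2.2 s hs i
  have hquad : ∑ j, ∑ k, Γ' (γ (h s)) i j k * deriv (fun u => γ (h u) j) s
      * deriv (fun u => γ (h u) k) s = deriv h s ^ 2 * quadContract (Γ' (γ (h s))) v i := by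
    simp only [hfirst, ← quadContract_smul]
    rfl
  rw [hsecond, hquad] at hΓ'
  rw [quadContract_sub]
  field_simp
  change _ + quadContract (Γ (γ (h s))) v i = 0 at hΓ
  linear_combination hΓ' - deriv h s ^ 2 * hΓ

lemma contDiffOn_of_hasDerivAt_eq_comp {E : Type*} [NormedAddCommGroup E] [NormedSpace ℝ E]
    {G : E → E} {V : Set E} (hG : ContDiffOn ℝ ∞ G V) {f : ℝ → E} {I : Set ℝ} (hI : IsOpen I)
    (hfV : MapsTo f I V) (hf : ∀ t ∈ I, HasDerivAt f (G (f t)) t) :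
    ContDiffOn ℝ ∞ f I := by
  rw [contDiffOn_infty]
  intro m
  induction m with
  | zero => exact contDiffOn_zero.2 fun t ht => (hf t ht).continuousAt.continuousWithinAt
  | succ m ih =>
    rw [Nat.cast_succ, contDiffOn_succ_iff_deriv_of_isOpen hI]
    refine ⟨fun t ht => (hf t ht).differentiableAt.differentiableWithinAt, by simp, ?_⟩
    exact ((hG.of_le (by exact_mod_cast le_top)).comp ih hfV).congr fun t ht => (hf t ht).deriv

def geodesicSpray {n : ℕ} (Γ : Christoffel n) (y : (Fin n → ℝ) × (Fin n → ℝ)) :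
    (Fin n → ℝ) × (Fin n → ℝ) :=
  (y.2, -quadContract (Γ y.1) y.2)

lemma contDiffOn_geodesicSpray {n : ℕ} {U : Set (Fin n → ℝ)} {Γ : Christoffel n}
    (hsm : SmoothChristoffelOn U Γ) : ContDiffOn ℝ ∞ (geodesicSpray Γ) (U ×ˢ univ) := by
  have hvel : ∀ j, ContDiff ℝ ∞ fun y : (Fin n → ℝ) × (Fin n → ℝ) => y.2 j := fun j =>
    (contDiff_apply ℝ ℝ j).comp contDiff_snd
  refine contDiff_snd.contDiffOn.prodMk (contDiffOn_pi.2 fun i => ContDiffOn.neg ?_)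
  refine ContDiffOn.sum fun j _ => ContDiffOn.sum fun k _ => ?_
  exact (((hsm i j k).comp contDiff_fst.contDiffOn fun y hy => hy.1).mul
    (hvel j).contDiffOn).mul (hvel k).contDiffOn

lemma exists_isGeodesicOn {n : ℕ} {U : Set (Fin n → ℝ)} (hU : IsOpen U) {Γ : Christoffel n}
    (hsm : SmoothChristoffelOn U Γ) {p : Fin n → ℝ} (hp : p ∈ U) (v : Fin n → ℝ) :
    ∃ γ I, IsOpen I ∧ (0 : ℝ) ∈ I ∧ IsGeodesicOn U Γ γ I ∧ γ 0 = p ∧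
      ∀ i, deriv (fun t => γ t i) 0 = v i := by
  have hUV : U ×ˢ univ ∈ nhds (p, v) := (hU.prod isOpen_univ).mem_nhds ⟨hp, mem_univ v⟩
  obtain ⟨f, hf0, ε, hε, hf⟩ :=
    (((contDiffOn_geodesicSpray hsm).contDiffAt hUV).of_le (by exact_mod_cast le_top)
      ).exists_forall_mem_closedBall_exists_eq_forall_mem_Ioo_hasDerivAt₀ 0
  have h0 : (0 : ℝ) ∈ Ioo (0 - ε) (0 + ε) := by simp [hε]
  obtain ⟨s, hsV, hs, hs0⟩ := mem_nhds_iff.mp <|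
    (hf 0 h0).continuousAt.preimage_mem_nhds (hf0 ▸ hUV)
  set I := s ∩ Ioo (0 - ε) (0 + ε)
  have hI : IsOpen I := hs.inter isOpen_Ioo
  have hfI : ∀ t ∈ I, HasDerivAt f (geodesicSpray Γ (f t)) t := fun t ht => hf t ht.2
  have hfsm := contDiffOn_of_hasDerivAt_eq_comp (contDiffOn_geodesicSpray hsm) hI
    (fun t ht => hsV ht.1) hfI
  have hpos : ∀ t ∈ I, ∀ i, HasDerivAt (fun u => (f u).1 i) ((f t).2 i) t := fun t ht =>
    hasDerivAt_pi.1 ((hasFDerivAt_fst (𝕜 := ℝ) (p := f t)).comp_hasDerivAt t (hfI t ht))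
  have hvel : ∀ t ∈ I, ∀ i, HasDerivAt (fun u => (f u).2 i)
      (-quadContract (Γ (f t).1) (f t).2 i) t := fun t ht =>
    hasDerivAt_pi.1 ((hasFDerivAt_snd (𝕜 := ℝ) (p := f t)).comp_hasDerivAt t (hfI t ht))
  refine ⟨fun t => (f t).1, I, hI, ⟨hs0, h0⟩, ⟨fun t ht => (hsV ht.1).1, fun i => ?_,
    fun t ht i => ?_⟩, by simp [hf0], fun i => by simp [(hpos 0 ⟨hs0, h0⟩ i).deriv, hf0]⟩
  · exact ((contDiff_apply ℝ ℝ i).comp contDiff_fst).comp_contDiffOn hfsm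
  · have hcongr : (fun u => deriv (fun u => (f u).1 i) u) =ᶠ[nhds t] fun u => (f u).2 i := by
      filter_upwards [hI.mem_nhds ht] with u hu using (hpos u hu i).deriv
    simp only [hcongr.deriv_eq, (hvel t ht i).deriv, fun j => (hpos t ht j).deriv]
    simp [quadContract]

lemma ProjEquivOn.exists_projChange {n : ℕ} {U : Set (Fin n → ℝ)} (hU : IsOpen U)
    {Γ Γ' : Christoffel n} (hTF : TorsionFree Γ) (hTF' : TorsionFree Γ')
    (hsm : SmoothChristoffelOn U Γ) (hproj : ProjEquivOn U Γ Γ') :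
    ∃ φ, ProjChange Γ Γ' φ U := by
  have hpt : ∀ p, ∃ φ : Fin n → ℝ, p ∈ U → ∀ i j k, Γ' p i j k =
      Γ p i j k + (if i = j then φ k else 0) + (if i = k then φ j else 0) := by
    intro p
    by_cases hp : p ∈ U
    swap
    · exact ⟨0, fun hp' => absurd hp' hp⟩
    have hpar : ∀ v a b, quadContract (Γ' p - Γ p) v a * v b
        = quadContract (Γ' p - Γ p) v b * v a := by
      intro v a b
      obtain ⟨γ, I, hI, h0, hγ, hγ0, hγv⟩ := exists_isGeodesicOn hU hsm hp v
      obtain ⟨h, J, hJ, hh, hγh⟩ := hproj.1 γ I hI hγ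
      obtain ⟨s, hs, hs0⟩ := hh.2.2.surjOn h0
      obtain ⟨c, hc⟩ := hγ.exists_quadContract_sub_eq_smul hI hJ hh hγh hs
      simp only [hs0, hγ0, hγv] at hc
      rw [hc a, hc b]
      ring
    obtain ⟨φ, hφ⟩ := exists_eq_delta_of_quadContract_parallel (Γ' p - Γ p)
      (fun i j k => by simp only [Pi.sub_apply, hTF p i j k, hTF' p i j k]) hpar
    refine ⟨φ, fun _ i j k => ?_⟩
    rw [add_assoc, ← hφ i j k, Pi.sub_apply, Pi.sub_apply, Pi.sub_apply]
    ring
  choose φ hφ using hpt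
  exact ⟨φ, hφ⟩

lemma covForm2_of_projChange {n : ℕ} (w : ℝ) {Γ Γ' : Christoffel n}
    {φ : (Fin n → ℝ) → Fin n → ℝ} {U : Set (Fin n → ℝ)} (hΓ : ProjChange Γ Γ' φ U)
    (K : (Fin n → ℝ) → Fin n → Fin n → ℝ) {p : Fin n → ℝ} (hp : p ∈ U) (a b c : Fin n) :
    covForm2 w Γ' K p a b c = covForm2 w Γ K p a b c
      - (w + 2) * φ p c * K p a b - φ p a * K p c b - φ p b * K p a c := by
  have hsum : ∀ (F : Fin n → ℝ) (x y : Fin n), ∑ s, Γ' p s x y * F s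
      = ∑ s, Γ p s x y * F s + φ p y * F x + φ p x * F y := fun F x y => by
    simp only [hΓ p hp, add_mul, ite_mul, zero_mul, Finset.sum_add_distrib, Finset.sum_ite_eq',
      Finset.mem_univ, if_true]
  have htrace : ∑ s, Γ' p s s c = ∑ s, Γ p s s c + ((n : ℝ) + 1) * φ p c := by
    simp only [hΓ p hp, if_true, Finset.sum_add_distrib, Finset.sum_ite_eq', Finset.mem_univ,
      Finset.sum_const, Finset.card_univ, Fintype.card_fin, nsmul_eq_mul]
    ring
  have hn : (n : ℝ) + 1 ≠ 0 := by positivity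
  simp only [covForm2, hsum (fun s => K p s b), hsum (fun s => K p a s), htrace]
  field_simp
  ring

lemma cyclic_covForm2_of_projChange {n : ℕ} (w : ℝ) {Γ Γ' : Christoffel n}
    {φ : (Fin n → ℝ) → Fin n → ℝ} {U : Set (Fin n → ℝ)} (hΓ : ProjChange Γ Γ' φ U)
    {K : (Fin n → ℝ) → Fin n → Fin n → ℝ} {p : Fin n → ℝ} (hp : p ∈ U)
    (hKsymm : ∀ i j, K p i j = K p j i) (i j k : Fin n) :
    covForm2 w Γ' K p i j k + covForm2 w Γ' K p j k i + covForm2 w Γ' K p k i j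
      = covForm2 w Γ K p i j k + covForm2 w Γ K p j k i + covForm2 w Γ K p k i j
        - (w + 4) * (φ p i * K p j k + φ p j * K p k i + φ p k * K p i j) := by
  simp only [covForm2_of_projChange w hΓ K hp, hKsymm k j, hKsymm j i, hKsymm k i]
  ring

theorem statement_5_general {n : ℕ} (U : Set (Fin n → ℝ)) (hU : IsOpen U)
    (Γ Γ' : Christoffel n) (hTF : TorsionFree Γ) (hTF' : TorsionFree Γ')
    (hsm : SmoothChristoffelOn U Γ)
    (hproj : ProjEquivOn U Γ Γ')
    (K : (Fin n → ℝ) → Fin n → Fin n → ℝ)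
    (hKsymm : ∀ p i j, K p i j = K p j i) :
    ∀ p ∈ U, ∀ i j k,
      covForm2 (-4) Γ' K p i j k + covForm2 (-4) Γ' K p j k i + covForm2 (-4) Γ' K p k i j
        = covForm2 (-4) Γ K p i j k + covForm2 (-4) Γ K p j k i
          + covForm2 (-4) Γ K p k i j := by
  intro p hp i j k
  obtain ⟨φ, hφ⟩ := hproj.exists_projChange hU hTF hTF' hsm
  rw [cyclic_covForm2_of_projChange (-4) hφ hp (hKsymm p) i j k]
  ring

/-- For symmetric `(0,2)`-tensors of projective weight `−4` the operator
`K ↦ Symmetrization(∇K)`, in indices `K_{ij} ↦ K_{ij,k} + K_{jk,i} + K_{ki,j}`, is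
projectively invariant: it is the same for any two projectively equivalent torsion-free
connections. -/
theorem statement_5 {n : ℕ} (hn : 2 ≤ n) (U : Set (Fin n → ℝ)) (hU : IsOpen U)
    (Γ Γ' : Christoffel n) (hTF : TorsionFree Γ) (hTF' : TorsionFree Γ')
    (hsm : SmoothChristoffelOn U Γ) (hsm' : SmoothChristoffelOn U Γ')
    (hproj : ProjEquivOn U Γ Γ')
    (K : (Fin n → ℝ) → Fin n → Fin n → ℝ)
    (hKsymm : ∀ p i j, K p i j = K p j i)
    (hK : ∀ i j, ContDiffOn ℝ ∞ (fun p => K p i j) U) :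
    ∀ p ∈ U, ∀ i j k,
      covForm2 (-4) Γ' K p i j k + covForm2 (-4) Γ' K p j k i + covForm2 (-4) Γ' K p k i j
        = covForm2 (-4) Γ K p i j k + covForm2 (-4) Γ K p j k i
          + covForm2 (-4) Γ K p k i j :=
  statement_5_general U hU Γ Γ' hTF hTF' hsm hproj K hKsymm

end ProjGeo
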